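/- arXiv:1603.09701 — 12 statements merged into one kernel-verified Lean document; each statement's English description precedes it below -/
import Mathlib

section
/- Let G be a connected (α,β,w)-DT graph and let C₀ = {i ∈ V : w(i) ∈ [(α−β)/2, (α+β)/2)}. Then the subgraph of G induced by V∖C₀ is a unit interval graph with parameters (β, w), i.e., for distinct i,j ∈ V∖C₀, ij is an edge iff |w(i)−w(j)| ≤ β. In particular, if C₀ is empty then G is a unit interval graph. -/
def IsDTGraph {V : Type*} (G : SimpleGraph V) (α β : ℝ) (w : V → ℝ) : Prop :=
  0 < β ∧ β ≤ α ∧ (∀ i, 0 < w i) ∧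
    ∀ i j : V, i ≠ j → (G.Adj i j ↔ α ≤ w i + w j ∧ |w i - w j| ≤ β)

/-- Outside of `C₀ = {i : w i ∈ [(α-β)/2, (α+β)/2)}`, a connected DT graph behaves
as a unit interval graph with parameters `(β, w)`: for distinct vertices `i, j`
not in `C₀`, `ij` is an edge iff `|w i - w j| ≤ β`. -/
theorem stmt_1 {V : Type*} (G : SimpleGraph V) (α β : ℝ) (w : V → ℝ)
    (hDT : IsDTGraph G α β w) (hconn : G.Connected)
    (C₀ : Set V) (hC₀ : C₀ = {i : V | (α - β) / 2 ≤ w i ∧ w i < (α + β) / 2}) :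
    ∀ i j : V, i ∉ C₀ → j ∉ C₀ → i ≠ j → (G.Adj i j ↔ |w i - w j| ≤ β) := by
  obtain ⟨hβ, hβα, hw, hadj⟩ := hDT
  subst hC₀
  intro i j hi hj hij
  simp only [Set.mem_setOf_eq, not_and, not_lt] at hi hj
  rw [hadj i j hij]
  constructor
  · exact fun h => h.2
  · intro hd
    refine ⟨?_, hd⟩
    have key : ∀ k, w k < (α - β) / 2 → False := by
      intro k hk
      obtain ⟨l, hl⟩ : ∃ l, G.Adj k l := by
        have hne : k ≠ i ∨ k ≠ j := by
          rcases eq_or_ne k i with rfl | h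
          · exact Or.inr hij
          · exact Or.inl h
        rcases hne with h | h
        · obtain ⟨p⟩ := hconn.preconnected k i
          cases p with
          | nil => exact absurd rfl h
          | cons ha _ => exact ⟨_, ha⟩
        · obtain ⟨p⟩ := hconn.preconnected k j
          cases p with
          | nil => exact absurd rfl h
          | cons ha _ => exact ⟨_, ha⟩
      have h1 := (hadj k l hl.ne).mp hl
      have h2 := abs_le.mp h1.2
      linarith [h1.1, h2.1]
    have hi' : (α + β) / 2 ≤ w i := by
      by_contra h
      rcases lt_or_ge (w i) ((α - β) / 2) with h' | h'
      · exact key i h'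
      · exact h (hi h')
    have hj' : (α + β) / 2 ≤ w j := by
      by_contra h
      rcases lt_or_ge (w j) ((α - β) / 2) with h' | h'
      · exact key j h'
      · exact h (hj h')
    linarith
end

section
/- Let G be a connected (α,β,w)-DT graph in which any two vertices with identical closed-neighborhood relation (N(i)∖{j} = N(j)∖{i}) have equal weights. Let C₀ = {i : w(i) ∈ [(α−β)/2, (α+β)/2)}. Then for all distinct i,j ∈ C₀: w(i) ≤ w(j) if and only if N(i)∖{j} ⊆ N(j). Consequently the vicinal preorder restricted to C₀ is total. -/
/-- In a connected DT graph where vertices with identical neighborhoods (up to each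
other) have equal weights, for distinct vertices `i, j` of
`C₀ = {i : w i ∈ [(α-β)/2, (α+β)/2)}` we have `w i ≤ w j ↔ N(i)\{j} ⊆ N(j)`.
Consequently, the vicinal preorder restricted to `C₀` is total. -/
theorem stmt_2 {V : Type*} (G : SimpleGraph V) (α β : ℝ) (w : V → ℝ)
    (hDT : IsDTGraph G α β w) (hconn : G.Connected)
    (hsame : ∀ i j : V, G.neighborSet i \ {j} = G.neighborSet j \ {i} → w i = w j)
    (C₀ : Set V) (hC₀ : C₀ = {i : V | (α - β) / 2 ≤ w i ∧ w i < (α + β) / 2}) :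
    (∀ i ∈ C₀, ∀ j ∈ C₀, i ≠ j →
      (w i ≤ w j ↔ G.neighborSet i \ {j} ⊆ G.neighborSet j)) ∧
    (∀ i ∈ C₀, ∀ j ∈ C₀,
      G.neighborSet i \ {j} ⊆ G.neighborSet j ∨
      G.neighborSet j \ {i} ⊆ G.neighborSet i) := by
  obtain ⟨hβ, hβα, hwpos, hadj⟩ := hDT
  subst hC₀
  have key : ∀ i j : V, ((α - β) / 2 ≤ w i ∧ w i < (α + β) / 2) →
      ((α - β) / 2 ≤ w j ∧ w j < (α + β) / 2) → i ≠ j → w i ≤ w j →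
      G.neighborSet i \ {j} ⊆ G.neighborSet j := by
    rintro i j ⟨hi1, hi2⟩ ⟨hj1, hj2⟩ hij hle k ⟨hk, hkj⟩
    simp only [SimpleGraph.mem_neighborSet] at hk ⊢
    have hkj' : k ≠ j := hkj
    obtain ⟨h1, h2⟩ := (hadj i k hk.ne).mp hk
    obtain ⟨h2a, h2b⟩ := abs_le.mp h2
    refine (hadj j k (Ne.symm hkj')).mpr ⟨by linarith, abs_le.mpr ⟨by linarith, by linarith⟩⟩
  have main : ∀ i ∈ {i : V | (α - β) / 2 ≤ w i ∧ w i < (α + β) / 2},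
      ∀ j ∈ {i : V | (α - β) / 2 ≤ w i ∧ w i < (α + β) / 2}, i ≠ j →
      (w i ≤ w j ↔ G.neighborSet i \ {j} ⊆ G.neighborSet j) := by
    intro i hi j hj hij
    constructor
    · exact key i j hi hj hij
    · intro hsub
      by_contra hlt
      push_neg at hlt
      have hsub' := key j i hj hi hij.symm hlt.le
      have heq : G.neighborSet i \ {j} = G.neighborSet j \ {i} := by
        ext k
        constructor
        · rintro ⟨hk, hkj⟩
          exact ⟨hsub ⟨hk, hkj⟩, fun h => (h ▸ hk).ne rfl⟩
        · rintro ⟨hk, hki⟩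
          refine ⟨hsub' ⟨hk, hki⟩, fun h => (h ▸ hk).ne rfl⟩
      have := hsame i j heq
      linarith
  refine ⟨main, fun i hi j hj => ?_⟩
  by_cases hij : i = j
  · subst hij
    left
    rintro k ⟨hk, _⟩
    exact hk
  · rcases le_total (w i) (w j) with h | h
    · exact Or.inl ((main i hi j hj hij).mp h)
    · exact Or.inr ((main j hj i hi (Ne.symm hij)).mp h)
end

section
/- Let G be a connected (α,β,w)-DT graph, C₀ = {i : w(i) ∈ [(α−β)/2, (α+β)/2)}, and (C₀, C₁, …, C_m) the distance decomposition of V from C₀. Then for every l with 1 ≤ l ≤ m, the subgraph of G induced by C_l is a clique. -/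
/-- In the distance decomposition of a connected DT graph from
`C₀ = {i : w i ∈ [(α-β)/2, (α+β)/2)}`, each layer `C_l` with `1 ≤ l ≤ m`
induces a clique. -/
theorem stmt_4 {V : Type*} (G : SimpleGraph V) (α β : ℝ) (w : V → ℝ)
    (hDT : IsDTGraph G α β w) (hconn : G.Connected)
    (C₀ : Set V) (hC₀ : C₀ = {i : V | (α - β) / 2 ≤ w i ∧ w i < (α + β) / 2})
    (hne : C₀.Nonempty)
    (layer : V → ℕ) (hlayer : ∀ i : V, layer i = sInf ((fun j => G.dist i j) '' C₀))
    (m : ℕ) (hm : ∀ i : V, layer i ≤ m) :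
    ∀ l : ℕ, 1 ≤ l → l ≤ m →
      ∀ i j : V, layer i = l → layer j = l → i ≠ j → G.Adj i j := by
  obtain ⟨hβ, hβα, hpos, hadj⟩ := hDT
  -- every vertex has weight at least (α-β)/2
  have hsmall : ∀ x : V, (α - β) / 2 ≤ w x := by
    intro x
    by_contra hx
    push_neg at hx
    obtain ⟨c, hc⟩ := hne
    have hxc : x ≠ c := by
      rintro rfl
      rw [hC₀] at hc
      exact absurd hc.1 (not_le.mpr hx)
    obtain ⟨p⟩ : G.Reachable x c := hconn x c
    cases p with
    | nil => exact hxc rfl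
    | cons h p' =>
      rename_i b
      obtain ⟨hsum, habs⟩ := (hadj x b h.ne).mp h
      have h1 := abs_le.mp habs
      linarith [h1.1, h1.2]
  -- adjacency criterion when the first vertex is "large"
  have adj_of : ∀ u y : V, u ≠ y → (α + β) / 2 ≤ w u → |w u - w y| ≤ β → G.Adj u y := by
    intro u y hne' hu habs
    rw [hadj u y hne']
    have h1 := abs_le.mp habs
    exact ⟨by linarith [h1.1, h1.2], habs⟩
  -- layer is at most the distance to any vertex of C₀
  have layer_le_dist : ∀ x c : V, c ∈ C₀ → layer x ≤ G.dist x c := by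
    intro x c hc
    rw [hlayer]
    exact Nat.sInf_le ⟨c, hc, rfl⟩
  -- the infimum defining layer is attained
  have layer_attained : ∀ x : V, ∃ c ∈ C₀, G.dist x c = layer x := by
    intro x
    have hne' : ((fun j => G.dist x j) '' C₀).Nonempty := hne.image _
    have hmem := Nat.sInf_mem hne'
    obtain ⟨c, hc, hdc⟩ := hmem
    exact ⟨c, hc, by rw [hlayer]; exact hdc⟩
  -- layers of adjacent vertices differ by at most one
  have layer_adj : ∀ a b : V, G.Adj a b → layer a ≤ layer b + 1 := by
    intro a b hab
    obtain ⟨c, hc, hdc⟩ := layer_attained b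
    obtain ⟨q, hq⟩ := hconn.exists_walk_length_eq_dist b c
    calc layer a ≤ G.dist a c := layer_le_dist a c hc
      _ ≤ (SimpleGraph.Walk.cons hab q).length := SimpleGraph.dist_le _
      _ = q.length + 1 := by simp
      _ = layer b + 1 := by rw [hq, hdc]
  -- along a walk descending below a threshold, find the first crossing
  have cross : ∀ (r : ℝ) {v c : V} (p : G.Walk v c), w c ≤ r → r < w v →
      ∃ y, w y ≤ r ∧ r - β < w y ∧ ∃ q : G.Walk y c, q.length < p.length := by
    intro r v c p
    induction p with
    | nil =>
      intro hc hv
      exact absurd hv (not_lt.mpr hc)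
    | @cons v₀ b c₀ h p' ih =>
      intro hc hv
      by_cases hb : w b ≤ r
      · refine ⟨b, hb, ?_, p', by simp⟩
        have habs := abs_le.mp ((hadj v₀ b h.ne).mp h).2
        linarith [habs.1, habs.2]
      · push_neg at hb
        obtain ⟨y, h1, h2, q, hq⟩ := ih hc hb
        exact ⟨y, h1, h2, q, by simpa using Nat.lt_succ_of_lt hq⟩
  -- a large vertex u finds an adjacent vertex of smaller layer than v when w v is much larger
  have step : ∀ u v : V, (α + β) / 2 ≤ w u → w u + β < w v →
      ∃ y, layer y < layer v ∧ G.Adj u y ∧ w u < w y ∧ w y ≤ w u + β := by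
    intro u v hu hv
    obtain ⟨c, hc, hdc⟩ := layer_attained v
    obtain ⟨p, hp⟩ := hconn.exists_walk_length_eq_dist v c
    have hwc : w c ≤ w u + β := by
      rw [hC₀] at hc
      linarith [hc.2]
    obtain ⟨y, h1, h2, q, hq⟩ := cross (w u + β) p hwc hv
    have hyu : w u < w y := by linarith
    have huy : u ≠ y := fun e => absurd (e ▸ hyu) (lt_irrefl _)
    have hadjuy : G.Adj u y := adj_of u y huy hu (abs_le.mpr ⟨by linarith, by linarith⟩)
    have hlay : layer y < layer v := by
      have h3 : layer y ≤ q.length := le_trans (layer_le_dist y c hc) (SimpleGraph.dist_le q)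
      omega
    exact ⟨y, hlay, hadjuy, hyu, h1⟩
  -- every vertex of positive layer is "large"
  have large : ∀ x : V, 1 ≤ layer x → (α + β) / 2 ≤ w x := by
    intro x hx
    have hx0 : x ∉ C₀ := by
      intro hxc
      have : layer x ≤ G.dist x x := layer_le_dist x x hxc
      rw [SimpleGraph.dist_self] at this
      omega
    rw [hC₀] at hx0
    by_contra hcon
    push_neg at hcon
    exact hx0 ⟨hsmall x, hcon⟩
  -- a vertex of positive layer has a neighbor of smaller layer
  have nb : ∀ v : V, 1 ≤ layer v → ∃ y, G.Adj v y ∧ layer y < layer v := by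
    intro v hv
    obtain ⟨c, hc, hdc⟩ := layer_attained v
    obtain ⟨p, hp⟩ := hconn.exists_walk_length_eq_dist v c
    cases p with
    | nil =>
      exfalso
      rw [SimpleGraph.Walk.length_nil] at hp
      omega
    | cons h p' =>
      rename_i b
      refine ⟨b, h, ?_⟩
      have h1 : layer b ≤ p'.length := le_trans (layer_le_dist b c hc) (SimpleGraph.dist_le p')
      have h2 : p'.length + 1 = layer v := by
        rw [← hdc, ← hp]; simp
      omega
  -- monotonicity: a large vertex with smaller weight has smaller-or-equal layer
  have mono : ∀ u : V, (α + β) / 2 ≤ w u → ∀ L : ℕ, ∀ v : V, layer v = L → w u ≤ w v →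
      layer u ≤ L := by
    intro u hu L
    induction L using Nat.strong_induction_on with
    | _ L ih =>
      intro v hv huv
      rcases Nat.eq_zero_or_pos L with h0 | h1
      · exfalso
        obtain ⟨c, hc, hdc⟩ := layer_attained v
        have hd0 : G.dist v c = 0 := by omega
        have hvc : v = c := (hconn.dist_eq_zero_iff).mp hd0
        rw [hC₀] at hc
        have := hc.2
        rw [← hvc] at this
        linarith
      · by_cases hb : w v ≤ w u + β
        · obtain ⟨y, hadjvy, hly⟩ := nb v (by omega)
          have habs := abs_le.mp ((hadj v y hadjvy.ne).mp hadjvy).2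
          by_cases hyb : w y ≤ w u + β
          · rcases eq_or_ne u y with rfl | huy
            · omega
            · have : G.Adj u y :=
                adj_of u y huy hu (abs_le.mpr ⟨by linarith [habs.1, habs.2],
                  by linarith [habs.1, habs.2]⟩)
              have := layer_adj u y this
              omega
          · push_neg at hyb
            obtain ⟨z, hlz, hadjz, _, _⟩ := step u y hu hyb
            have := layer_adj u z hadjz
            omega
        · push_neg at hb
          obtain ⟨y, hly, hadjuy, _, _⟩ := step u v hu hb
          have := layer_adj u y hadjuy
          omega
  -- main argument
  intro l hl1 _ i j hi hj hij
  have key : ∀ a b : V, layer a = l → layer b = l → a ≠ b → w a ≤ w b → G.Adj a b := by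
    intro a b ha hb hab hwab
    have hla : (α + β) / 2 ≤ w a := large a (by omega)
    by_cases hgap : w b ≤ w a + β
    · exact adj_of a b hab hla (abs_le.mpr ⟨by linarith, by linarith⟩)
    · push_neg at hgap
      exfalso
      obtain ⟨y, hly, _, hwy1, hwy2⟩ := step a b hla hgap
      have := mono a hla (layer y) y rfl (le_of_lt hwy1)
      omega
  rcases le_total (w i) (w j) with h | h
  · exact key i j hi hj hij h
  · exact (key j i hj hi (Ne.symm hij) h).symm
end

section
/- The cycle C₄ on four vertices is not a doubly threshold graph: there do not exist parameters α ≥ β > 0 and a weight function w on the four vertices such that edges of C₄ are exactly the pairs {i,j} with w(i)+w(j) ≥ α and |w(i)−w(j)| ≤ β. -/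
/-- The cycle `C₄` on four vertices is not a doubly threshold graph: no parameters
`α ≥ β > 0` and positive weight function realize its edges via the DT conditions. -/
theorem stmt_5 :
    ¬ ∃ (α β : ℝ) (w : Fin 4 → ℝ), 0 < β ∧ β ≤ α ∧ (∀ i, 0 < w i) ∧
      ∀ i j : Fin 4, i ≠ j →
        ((SimpleGraph.cycleGraph 4).Adj i j ↔
          α ≤ w i + w j ∧ |w i - w j| ≤ β) := by
  rintro ⟨α, β, w, hβ, hβα, hw, h⟩
  have e01 := (h 0 1 (by decide)).mp (by decide)
  have e12 := (h 1 2 (by decide)).mp (by decide)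
  have e23 := (h 2 3 (by decide)).mp (by decide)
  have e30 := (h 3 0 (by decide)).mp (by decide)
  have ne02 : ¬ (α ≤ w 0 + w 2 ∧ |w 0 - w 2| ≤ β) := by
    intro hc
    exact absurd ((h 0 2 (by decide)).mpr hc) (by decide)
  have ne13 : ¬ (α ≤ w 1 + w 3 ∧ |w 1 - w 3| ≤ β) := by
    intro hc
    exact absurd ((h 1 3 (by decide)).mpr hc) (by decide)
  rw [abs_le] at e01 e12 e23 e30
  obtain ⟨a1, b1, c1⟩ := e01
  obtain ⟨a2, b2, c2⟩ := e12
  obtain ⟨a3, b3, c3⟩ := e23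
  obtain ⟨a4, b4, c4⟩ := e30
  rw [not_and_or, not_le, not_le, lt_abs] at ne02 ne13
  rcases ne02 with h02 | (h02 | h02) <;>
    rcases ne13 with h13 | (h13 | h13) <;> linarith
end

section
/- Every doubly threshold graph is C₄-free: no DT graph contains an induced cycle of length four. -/
/-- DT graphs are `C₄`-free: there are no four vertices `a, b, c, d` inducing a
four-cycle (edges `ab, bc, cd, da`, non-edges `ac, bd`). -/
theorem stmt_6 {V : Type*} (G : SimpleGraph V)
    (hDT : ∃ (α β : ℝ) (w : V → ℝ), IsDTGraph G α β w) :
    ¬ ∃ a b c d : V, a ≠ b ∧ a ≠ c ∧ a ≠ d ∧ b ≠ c ∧ b ≠ d ∧ c ≠ d ∧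
      G.Adj a b ∧ G.Adj b c ∧ G.Adj c d ∧ G.Adj d a ∧ ¬ G.Adj a c ∧ ¬ G.Adj b d := by
  rintro ⟨a, b, c, d, hab, hac, had, hbc, hbd, hcd, eab, ebc, ecd, eda, nac, nbd⟩
  obtain ⟨α, β, w, hβ, hβα, hw, hiff⟩ := hDT
  have Hab := (hiff a b hab).mp eab
  have Hbc := (hiff b c hbc).mp ebc
  have Hcd := (hiff c d hcd).mp ecd
  have Hda := (hiff d a had.symm).mp eda
  have Nac := (hiff a c hac).not.mp nac
  have Nbd := (hiff b d hbd).not.mp nbd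
  rw [abs_le] at Hab Hbc Hcd Hda
  rw [not_and_or, not_le, not_le, lt_abs] at Nac Nbd
  obtain ⟨hab1, hab2, hab3⟩ := Hab
  obtain ⟨hbc1, hbc2, hbc3⟩ := Hbc
  obtain ⟨hcd1, hcd2, hcd3⟩ := Hcd
  obtain ⟨hda1, hda2, hda3⟩ := Hda
  rcases Nac with h | (h | h) <;> rcases Nbd with h' | (h' | h') <;> linarith
end

section
/- Every doubly threshold graph is chordal: every cycle of length at least four in a DT graph has a chord. Equivalently, DT graphs contain no induced cycle of length ≥ 4. -/
open SimpleGraph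

namespace IsDTGraph

variable {V : Type*} {G : SimpleGraph V} {α β : ℝ} {w : V → ℝ}

theorem adj_of_common_neighbor_of_le (hG : IsDTGraph G α β w) {u x y : V} (hxy : x ≠ y)
    (hux : G.Adj u x) (huy : G.Adj u y) (hx : w u ≤ w x) (hy : w u ≤ w y) : G.Adj x y := by
  obtain ⟨-, -, -, hadj⟩ := hG
  rw [hadj _ _ hux.ne, abs_le] at hux
  rw [hadj _ _ huy.ne, abs_le] at huy
  rw [hadj _ _ hxy, abs_le]
  exact ⟨by linarith, by linarith, by linarith⟩

end IsDTGraph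

theorem Fin.sub_one_ne_add_one {n : ℕ} (k : Fin (n + 3)) : k - 1 ≠ k + 1 := by
  intro h
  have h2 : (2 : Fin (n + 3)) = 0 := by
    calc (2 : Fin (n + 3)) = (k + 1) - (k - 1) := by abel
      _ = 0 := by rw [h, sub_self]
  simp [Fin.ext_iff, Nat.mod_eq_of_lt (show 2 < n + 3 by omega)] at h2

namespace SimpleGraph

theorem cycleGraph_adj_sub_one {n : ℕ} (k : Fin (n + 2)) : (cycleGraph (n + 2)).Adj k (k - 1) := by
  simp [cycleGraph_adj]

theorem cycleGraph_adj_add_one {n : ℕ} (k : Fin (n + 2)) : (cycleGraph (n + 2)).Adj k (k + 1) := by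
  simp [cycleGraph_adj]

theorem cycleGraph_not_adj_sub_one_add_one {n : ℕ} (k : Fin (n + 4)) :
    ¬(cycleGraph (n + 4)).Adj (k - 1) (k + 1) := by
  rw [cycleGraph_adj, show (k - 1) - (k + 1) = -2 by abel, show (k + 1) - (k - 1) = 2 by abel]
  simp [Fin.ext_iff, Fin.val_neg, Nat.mod_eq_of_lt (show 2 < n + 4 by omega)]

end SimpleGraph

/-- DT graphs are chordal: they contain no induced cycle of length at least four,
i.e. there is no graph embedding (induced-subgraph embedding) of the cycle graph
on `n ≥ 4` vertices into a DT graph. -/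
theorem stmt_7 {V : Type*} (G : SimpleGraph V)
    (hDT : ∃ (α β : ℝ) (w : V → ℝ), IsDTGraph G α β w) :
    ∀ n : ℕ, 4 ≤ n → IsEmpty (SimpleGraph.cycleGraph n ↪g G) := by
  obtain ⟨α, β, w, hG⟩ := hDT
  intro n hn
  obtain ⟨m, rfl⟩ := Nat.exists_eq_add_of_le' hn
  refine ⟨fun f => ?_⟩
  obtain ⟨k, hk⟩ := Finite.exists_min (w ∘ f)
  have hchord : G.Adj (f (k - 1)) (f (k + 1)) :=
    hG.adj_of_common_neighbor_of_le (f.injective.ne (Fin.sub_one_ne_add_one k))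
      (f.map_adj_iff.2 (cycleGraph_adj_sub_one k)) (f.map_adj_iff.2 (cycleGraph_adj_add_one k))
      (hk _) (hk _)
  exact cycleGraph_not_adj_sub_one_add_one k (f.map_adj_iff.1 hchord)
end

section
/- Let G be a (α,β,w)-DT graph that is a p-max partition witness, i.e., (V_T, V_U) is a partition of V arising from w with p ∈ V_T and w(p) = max{w(i) : i ∈ V_T}, where V_T = {i : w(i) ∈ [(α−β)/2, (α+β)/2)}. Then for every i ∈ V_T, N(i) ⊆ N(p) ∪ {p}. -/
/-- If `(V_T, V_U)` is a `p`-max partition of a DT graph (so `V_T` is the set of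
vertices with weight in `[(α-β)/2, (α+β)/2)`, `p ∈ V_T`, and `p` has maximum
weight among `V_T`), then for every `i ∈ V_T`, `N(i) ⊆ N(p) ∪ {p}`. -/
theorem stmt_12 {V : Type*} (G : SimpleGraph V) (α β : ℝ) (w : V → ℝ)
    (hDT : IsDTGraph G α β w)
    (VT VU : Set V)
    (hVT : VT = {i : V | (α - β) / 2 ≤ w i ∧ w i < (α + β) / 2})
    (hVU : VU = VTᶜ)
    (p : V) (hp : p ∈ VT) (hpmax : ∀ i ∈ VT, w i ≤ w p) :
    ∀ i ∈ VT, G.neighborSet i ⊆ G.neighborSet p ∪ {p} := by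
  obtain ⟨hβ, hβα, hwpos, hadj⟩ := hDT
  intro i hi j hj
  by_cases hjp : j = p
  · right; simp [hjp]
  · left
    simp only [SimpleGraph.mem_neighborSet] at hj ⊢
    have hij : i ≠ j := G.ne_of_adj hj
    rw [hadj i j hij] at hj
    obtain ⟨hsum, hdiff⟩ := hj
    rw [hVT] at hp hi
    obtain ⟨hp1, hp2⟩ := hp
    obtain ⟨hi1, hi2⟩ := hi
    have hip : w i ≤ w p := by
      apply hpmax; rw [hVT]; exact ⟨hi1, hi2⟩
    rw [hadj p j (fun h => hjp h.symm)]
    rw [abs_le] at hdiff ⊢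
    constructor
    · linarith
    · constructor <;> linarith
end

section
/- Let G be an (α,β,w)-DT graph with vertices ordered by nondecreasing weight, and let S = {i : N_i⁺ ≠ ∅ and {i} ∪ N_i⁺ ⊄ N_{i−1}⁺}. Then the family {C_i = {i} ∪ N_i⁺ : i ∈ S} is an edge clique cover of G: each C_i induces a clique, and every edge of G lies in some C_i. Hence the intersection number of G is at most |S|. -/
/-- A family of finite vertex sets is an edge clique cover of `G` if each member
induces a clique and every edge lies inside some member. -/
def IsEdgeCliqueCover {V : Type*} (G : SimpleGraph V) (F : Finset (Finset V)) : Prop :=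
  (∀ C ∈ F, G.IsClique (C : Set V)) ∧
    ∀ a b : V, G.Adj a b → ∃ C ∈ F, a ∈ C ∧ b ∈ C

/-- For a DT graph with vertices ordered by nondecreasing weight, the cliques
`C_i = {i} ∪ N_i⁺` for `i ∈ S` form an edge clique cover, so the intersection
number is at most `|S|`. -/
theorem stmt_14 {n : ℕ} (G : SimpleGraph (Fin n)) [DecidableRel G.Adj]
    (α β : ℝ) (w : Fin n → ℝ) (hDT : IsDTGraph G α β w) (hmono : Monotone w)
    (Nplus : Fin n → Finset (Fin n))
    (hN : ∀ i, Nplus i = Finset.univ.filter (fun j => i < j ∧ G.Adj i j))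
    (S : Finset (Fin n))
    (hS : ∀ i, i ∈ S ↔ (Nplus i).Nonempty ∧
      ∀ i' : Fin n, (i' : ℕ) + 1 = (i : ℕ) → ¬ insert i (Nplus i) ⊆ Nplus i') :
    IsEdgeCliqueCover G (S.image (fun i => insert i (Nplus i))) ∧
      ∃ F : Finset (Finset (Fin n)), IsEdgeCliqueCover G F ∧ F.card ≤ S.card := by
  obtain ⟨hβ, hβα, hw, hadj⟩ := hDT
  have clique : ∀ i : Fin n, G.IsClique ((insert i (Nplus i) : Finset (Fin n)) : Set (Fin n)) := by
    intro i x hx y hy hxy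
    simp only [Finset.coe_insert, Set.mem_insert_iff, Finset.mem_coe, hN,
      Finset.mem_filter, Finset.mem_univ, true_and] at hx hy
    rcases hx with rfl | ⟨hix, hax⟩
    · rcases hy with rfl | ⟨hiy, hay⟩
      · exact absurd rfl hxy
      · exact hay
    · rcases hy with rfl | ⟨hiy, hay⟩
      · exact hax.symm
      · obtain ⟨h1a, h1b⟩ := (hadj i x (ne_of_lt hix)).mp hax
        obtain ⟨h2a, h2b⟩ := (hadj i y (ne_of_lt hiy)).mp hay
        have hwix : w i ≤ w x := hmono hix.le
        have hwiy : w i ≤ w y := hmono hiy.le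
        rw [abs_le] at h1b h2b
        refine (hadj x y hxy).mpr ⟨by linarith, ?_⟩
        rw [abs_le]
        constructor <;> linarith
  have descend : ∀ m : ℕ, ∀ a : Fin n, (a : ℕ) ≤ m → (Nplus a).Nonempty →
      ∃ i ∈ S, insert a (Nplus a) ⊆ insert i (Nplus i) := by
    intro m
    induction m with
    | zero =>
      intro a ha hne
      refine ⟨a, ?_, subset_rfl⟩
      rw [hS]
      exact ⟨hne, fun i' hi' => absurd hi' (by omega)⟩
    | succ m ih =>
      intro a ha hne
      by_cases haS : a ∈ S
      · exact ⟨a, haS, subset_rfl⟩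
      · rw [hS] at haS
        push_neg at haS
        obtain ⟨i', hi'1, hi'2⟩ := haS hne
        have hne' : (Nplus i').Nonempty := ⟨a, hi'2 (Finset.mem_insert_self _ _)⟩
        obtain ⟨i, hiS, hsub⟩ := ih i' (by omega) hne'
        exact ⟨i, hiS, hi'2.trans ((Finset.subset_insert _ _).trans hsub)⟩
  have cover : ∀ a b : Fin n, a < b → G.Adj a b →
      ∃ C ∈ S.image (fun i => insert i (Nplus i)), a ∈ C ∧ b ∈ C := by
    intro a b hlt hab
    have hb : b ∈ Nplus a := by
      rw [hN]; simp [hlt, hab]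
    obtain ⟨i, hiS, hsub⟩ := descend (a : ℕ) a le_rfl ⟨b, hb⟩
    exact ⟨_, Finset.mem_image_of_mem _ hiS, hsub (Finset.mem_insert_self _ _),
      hsub (Finset.mem_insert_of_mem hb)⟩
  have main : IsEdgeCliqueCover G (S.image (fun i => insert i (Nplus i))) := by
    constructor
    · intro C hC
      obtain ⟨i, _, rfl⟩ := Finset.mem_image.mp hC
      exact clique i
    · intro a b hab
      rcases lt_or_gt_of_ne hab.ne with h | h
      · exact cover a b h hab
      · obtain ⟨C, hC, h1, h2⟩ := cover b a h hab.symm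
        exact ⟨C, hC, h2, h1⟩
  exact ⟨main, _, main, Finset.card_image_le⟩
end

section
/- Let G be an (α,β,w)-DT graph with vertices ordered by nondecreasing weight, and S = {i : N_i⁺ ≠ ∅ and {i} ∪ N_i⁺ ⊄ N_{i−1}⁺}. Then the intersection number of G equals |S|: there is a set X of |S| edges of G such that no clique of G contains two edges of X, so any edge clique cover has size at least |S|, and the cliques {i} ∪ N_i⁺ for i ∈ S cover all edges. -/
/-- The intersection number (minimum size of an edge clique cover) of a DT graph
with vertices ordered by nondecreasing weight equals `|S|`, where
`S = {i : N_i⁺ ≠ ∅ and {i} ∪ N_i⁺ ⊄ N_{i-1}⁺}`. -/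
theorem stmt_15 {n : ℕ} (G : SimpleGraph (Fin n)) [DecidableRel G.Adj]
    (α β : ℝ) (w : Fin n → ℝ) (hDT : IsDTGraph G α β w) (hmono : Monotone w)
    (Nplus : Fin n → Finset (Fin n))
    (hN : ∀ i, Nplus i = Finset.univ.filter (fun j => i < j ∧ G.Adj i j))
    (S : Finset (Fin n))
    (hS : ∀ i, i ∈ S ↔ (Nplus i).Nonempty ∧
      ∀ i' : Fin n, (i' : ℕ) + 1 = (i : ℕ) → ¬ insert i (Nplus i) ⊆ Nplus i') :
    IsLeast {k : ℕ | ∃ F : Finset (Finset (Fin n)),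
      IsEdgeCliqueCover G F ∧ F.card = k} S.card := by
  obtain ⟨hβ, hβα, hw, hadj⟩ := hDT
  have hmem : ∀ i k : Fin n, k ∈ Nplus i ↔ i < k ∧ G.Adj i k := by
    intro i k; rw [hN]; simp
  have hadj' : ∀ i j : Fin n, G.Adj i j → α ≤ w i + w j ∧ |w i - w j| ≤ β :=
    fun i j h => (hadj i j h.ne).mp h
  have mkadj : ∀ i j : Fin n, i ≠ j → α ≤ w i + w j → |w i - w j| ≤ β → G.Adj i j :=
    fun i j hne h1 h2 => (hadj i j hne).mpr ⟨h1, h2⟩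
  -- each insert i (Nplus i) is a clique
  have hclique : ∀ i : Fin n, G.IsClique ((insert i (Nplus i) : Finset (Fin n)) : Set (Fin n)) := by
    intro i
    have key : ∀ a b : Fin n, a ∈ insert i (Nplus i) → b ∈ insert i (Nplus i) →
        a < b → G.Adj a b := by
      intro a b ha hb hab
      rcases Finset.mem_insert.mp ha with rfl | ha
      · rcases Finset.mem_insert.mp hb with rfl | hb
        · exact absurd hab (lt_irrefl _)
        · exact ((hmem a b).mp hb).2
      · rcases Finset.mem_insert.mp hb with rfl | hb
        · exact absurd (lt_trans ((hmem b a).mp ha).1 hab) (lt_irrefl _)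
        · obtain ⟨hia, hGa⟩ := (hmem i a).mp ha
          obtain ⟨hib, hGb⟩ := (hmem i b).mp hb
          obtain ⟨hs, hd⟩ := hadj' i b hGb
          have hwia : w i ≤ w a := hmono hia.le
          have hwab : w a ≤ w b := hmono hab.le
          have hd' : w b - w i ≤ β := by
            have := abs_le.mp hd; linarith [this.1]
          refine mkadj a b (ne_of_lt hab) (by linarith) (abs_le.mpr ⟨by linarith, by linarith⟩)
    intro a ha b hb hne
    rcases lt_or_gt_of_ne hne with h | h
    · exact key a b ha hb h
    · exact (key b a hb ha h).symm
  -- chase any vertex down to one in S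
  have hchain : ∀ m : ℕ, ∀ a : Fin n, (a : ℕ) ≤ m → (Nplus a).Nonempty →
      ∃ c ∈ S, insert a (Nplus a) ⊆ insert c (Nplus c) := by
    intro m
    induction m with
    | zero =>
      intro a ha hne
      refine ⟨a, (hS a).mpr ⟨hne, fun i' h => absurd h (by omega)⟩, subset_rfl⟩
    | succ m ih =>
      intro a ha hne
      by_cases haS : a ∈ S
      · exact ⟨a, haS, subset_rfl⟩
      · have := (hS a).not.mp haS
        push_neg at this
        obtain ⟨a', ha', hsub⟩ := this hne
        have haa' : a ∈ Nplus a' := hsub (Finset.mem_insert_self _ _)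
        obtain ⟨c, hc, hsub'⟩ := ih a' (by omega) ⟨a, haa'⟩
        exact ⟨c, hc, hsub.trans ((Finset.subset_insert _ _).trans hsub')⟩
  constructor
  · -- the cover of size S.card
    refine ⟨S.image (fun i => insert i (Nplus i)), ⟨?_, ?_⟩, ?_⟩
    · intro C hC
      obtain ⟨i, _, rfl⟩ := Finset.mem_image.mp hC
      exact hclique i
    · have hcov : ∀ a b : Fin n, a < b → G.Adj a b →
          ∃ C ∈ S.image (fun i => insert i (Nplus i)), a ∈ C ∧ b ∈ C := by
        intro a b hab hG
        have hb : b ∈ Nplus a := (hmem a b).mpr ⟨hab, hG⟩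
        obtain ⟨c, hc, hsub⟩ := hchain (a : ℕ) a le_rfl ⟨b, hb⟩
        exact ⟨insert c (Nplus c), Finset.mem_image_of_mem _ hc,
          hsub (Finset.mem_insert_self _ _), hsub (Finset.mem_insert_of_mem hb)⟩
      intro a b hG
      rcases lt_or_gt_of_ne hG.ne with h | h
      · exact hcov a b h hG
      · obtain ⟨C, hC, h1, h2⟩ := hcov b a h hG.symm
        exact ⟨C, hC, h2, h1⟩
    · rw [Finset.card_image_of_injOn]
      intro x hx y hy hxy
      have hxy' : insert x (Nplus x) = insert y (Nplus y) := hxy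
      have hx' : x ∈ insert y (Nplus y) := by rw [← hxy']; exact Finset.mem_insert_self _ _
      have hy' : y ∈ insert x (Nplus x) := by rw [hxy']; exact Finset.mem_insert_self _ _
      rcases Finset.mem_insert.mp hx' with h | h
      · exact h
      · rcases Finset.mem_insert.mp hy' with h' | h'
        · exact h'.symm
        · exact absurd ((hmem y x).mp h).1 (not_lt.mpr ((hmem x y).mp h').1.le)
  · -- lower bound
    rintro k ⟨F, ⟨hFcl, hFcov⟩, rfl⟩
    classical
    set M : Fin n → Fin n := fun i => if h : (Nplus i).Nonempty then (Nplus i).max' h else i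
      with hMdef
    have hM : ∀ i ∈ S, M i ∈ Nplus i := by
      intro i hi
      have hne := ((hS i).mp hi).1
      simp only [hMdef, dif_pos hne]
      exact Finset.max'_mem _ hne
    have hMmax : ∀ i ∈ S, ∀ k ∈ Nplus i, k ≤ M i := by
      intro i hi k hk
      have hne := ((hS i).mp hi).1
      simp only [hMdef, dif_pos hne]
      exact Finset.le_max' _ k hk
    have hadjM : ∀ i ∈ S, G.Adj i (M i) := fun i hi => ((hmem i (M i)).mp (hM i hi)).2
    have hex : ∀ i : Fin n, ∃ C, i ∈ S → (C ∈ F ∧ i ∈ C ∧ M i ∈ C) := by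
      intro i
      by_cases hi : i ∈ S
      · obtain ⟨C, hC, h1, h2⟩ := hFcov i (M i) (hadjM i hi)
        exact ⟨C, fun _ => ⟨hC, h1, h2⟩⟩
      · exact ⟨∅, fun h => absurd h hi⟩
    choose f hf using hex
    have hcore : ∀ i j : Fin n, i ∈ S → j ∈ S → i < j → f i ≠ f j := by
      intro i j hi hj hij hfeq
      obtain ⟨hCF, hiC, hMiC⟩ := hf i hi
      obtain ⟨_, hjC, hMjC⟩ := hf j hj
      rw [← hfeq] at hjC hMjC
      have hCcl := hFcl (f i) hCF
      have hjMj : j < M j := ((hmem j (M j)).mp (hM j hj)).1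
      have hGij : G.Adj i j := hCcl (Finset.mem_coe.mpr hiC) (Finset.mem_coe.mpr hjC)
        (ne_of_lt hij)
      have hGiMj : G.Adj i (M j) := hCcl (Finset.mem_coe.mpr hiC) (Finset.mem_coe.mpr hMjC)
        (ne_of_lt (lt_trans hij hjMj))
      -- extract inequalities
      obtain ⟨hs1, hd1⟩ := hadj' i j hGij
      obtain ⟨hs2, hd2⟩ := hadj' i (M j) hGiMj
      have hwij : w i ≤ w j := hmono hij.le
      have hd1' : w j - w i ≤ β := by have := abs_le.mp hd1; linarith [this.1]
      have hd2' : w (M j) - w i ≤ β := by have := abs_le.mp hd2; linarith [(abs_le.mp hd2).1]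
      -- the predecessor of j
      have hj1 : 1 ≤ (j : ℕ) := by
        have := hij; rw [Fin.lt_def] at this; omega
      set j' : Fin n := ⟨(j : ℕ) - 1, by omega⟩ with hj'def
      have hij' : i ≤ j' := by rw [Fin.le_def]; simp [hj'def]; rw [Fin.lt_def] at hij; omega
      have hj'j : j' < j := by rw [Fin.lt_def]; simp [hj'def]; omega
      have hwij' : w i ≤ w j' := hmono hij'
      have hsub : insert j (Nplus j) ⊆ Nplus j' := by
        intro k hk
        rcases Finset.mem_insert.mp hk with rfl | hk
        · refine (hmem j' k).mpr ⟨hj'j, ?_⟩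
          have hwj'k : w j' ≤ w k := hmono hj'j.le
          exact mkadj j' k (ne_of_lt hj'j) (by linarith)
            (abs_le.mpr ⟨by linarith, by linarith⟩)
        · obtain ⟨hjk, _⟩ := (hmem j k).mp hk
          have hkMj : k ≤ M j := hMmax j hj k hk
          have hwjk : w j ≤ w k := hmono hjk.le
          have hwkMj : w k ≤ w (M j) := hmono hkMj
          have hwj'k : w j' ≤ w k := hmono (le_of_lt (lt_trans hj'j hjk))
          refine (hmem j' k).mpr ⟨lt_trans hj'j hjk, ?_⟩
          exact mkadj j' k (ne_of_lt (lt_trans hj'j hjk)) (by linarith)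
            (abs_le.mpr ⟨by linarith, by linarith⟩)
      exact ((hS j).mp hj).2 j' (by simp [hj'def]; omega) hsub
    have hinj : Set.InjOn f S := by
      intro i hi j hj hfeq
      by_contra hne
      rcases lt_or_gt_of_ne hne with h | h
      · exact hcore i j hi hj h hfeq
      · exact hcore j i hj hi h hfeq.symm
    exact Finset.card_le_card_of_injOn f (fun i hi => (hf i hi).1) hinj
end

section
/- Let G be a connected (α,β,w)-DT graph with distance decomposition (C₀, C₁, …, C_m) from C₀ = {i : w(i) ∈ [(α−β)/2, (α+β)/2)}, with m ≥ 1. Then the diameter of G satisfies m ≤ D(G) ≤ m + 1. -/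
lemma dt_adj_dist_le_one {V : Type*} {G : SimpleGraph V} {x y : V} (h : G.Adj x y) :
    G.dist x y ≤ 1 := by
  have := SimpleGraph.dist_le (SimpleGraph.Walk.cons h SimpleGraph.Walk.nil)
  simpa using this

/-- Climbing lemma: if `u` is heavy (`w u ≥ (α+β)/2`) and there is a walk from `a`
down to `c` with `w c < w u ≤ w a`, then `dist u a ≤ length of the walk`. -/
lemma dt_climb {V : Type*} {G : SimpleGraph V} {α β : ℝ} {w : V → ℝ}
    (hDT : IsDTGraph G α β w) (hconn : G.Connected)
    {u : V} (hu : (α + β) / 2 ≤ w u) :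
    ∀ {a c : V} (p : G.Walk a c), w c < w u → w u ≤ w a → G.dist u a ≤ p.length := by
  obtain ⟨hβ, hβα, hwpos, hadj⟩ := hDT
  intro a c p
  induction p with
  | nil => intro h1 h2; linarith
  | @cons a b c h q ih =>
    intro h1 h2
    have hab := (hadj a b h.ne).mp h
    have habs := abs_sub_le_iff.mp hab.2
    by_cases hb : w u ≤ w b
    · have h3 : G.dist u b ≤ q.length := ih h1 hb
      have h4 : G.dist b a ≤ 1 := dt_adj_dist_le_one h.symm
      have := hconn.dist_triangle (u := u) (v := b) (w := a)
      simp only [SimpleGraph.Walk.length_cons]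
      omega
    · push_neg at hb
      rcases eq_or_ne u a with rfl | hne
      · simp [SimpleGraph.dist_self]
      · have huadj : G.Adj u a := by
          refine (hadj u a hne).mpr ⟨by linarith, ?_⟩
          rw [abs_sub_le_iff]
          constructor <;> linarith
        have h4 : G.dist u a ≤ 1 := dt_adj_dist_le_one huadj
        simp only [SimpleGraph.Walk.length_cons]
        omega

/-- If a connected DT graph has distance decomposition `(C₀, …, C_m)` from
`C₀ = {i : w i ∈ [(α-β)/2, (α+β)/2)}` with `m ≥ 1` (both `C₀` and `C_m`
nonempty), then its diameter `D(G)` satisfies `m ≤ D(G) ≤ m + 1`. -/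
theorem stmt_17 {V : Type*} (G : SimpleGraph V) (α β : ℝ) (w : V → ℝ)
    (hDT : IsDTGraph G α β w) (hconn : G.Connected)
    (C₀ : Set V) (hC₀ : C₀ = {i : V | (α - β) / 2 ≤ w i ∧ w i < (α + β) / 2})
    (hne : C₀.Nonempty)
    (layer : V → ℕ) (hlayer : ∀ i : V, layer i = sInf ((fun j => G.dist i j) '' C₀))
    (m : ℕ) (hm1 : 1 ≤ m) (hm : ∀ i : V, layer i ≤ m) (hmax : ∃ i : V, layer i = m) :
    (∃ u v : V, m ≤ G.dist u v) ∧ (∀ u v : V, G.dist u v ≤ m + 1) := by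
  obtain ⟨hβ, hβα, hwpos, hadj⟩ := hDT
  obtain ⟨u₀, hu₀⟩ := hmax
  obtain ⟨c₀, hc₀⟩ := hne
  -- basic layer facts
  have hlayer_le : ∀ i : V, ∀ c ∈ C₀, layer i ≤ G.dist i c := by
    intro i c hc
    rw [hlayer i]
    exact Nat.sInf_le ⟨c, hc, rfl⟩
  have hlayer_ex : ∀ i : V, ∃ c ∈ C₀, G.dist i c = layer i := by
    intro i
    have h : ((fun j => G.dist i j) '' C₀).Nonempty := ⟨_, ⟨c₀, hc₀, rfl⟩⟩
    have := Nat.sInf_mem h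
    rw [← hlayer i] at this
    obtain ⟨c, hc, hcd⟩ := this
    exact ⟨c, hc, hcd⟩
  have hlayer0 : ∀ c ∈ C₀, layer c = 0 := by
    intro c hc
    have h1 := hlayer_le c c hc
    simpa [SimpleGraph.dist_self] using h1
  -- two distinct vertices exist
  have hu₀c₀ : u₀ ≠ c₀ := by
    intro h; rw [h, hlayer0 c₀ hc₀] at hu₀; omega
  -- every vertex has a neighbor
  have hnbr : ∀ x : V, ∃ t : V, G.Adj x t := by
    intro x
    have : ∃ y : V, y ≠ x := by
      rcases eq_or_ne x u₀ with rfl | h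
      · exact ⟨c₀, fun h' => hu₀c₀ h'.symm⟩
      · exact ⟨u₀, Ne.symm h⟩
    obtain ⟨y, hy⟩ := this
    obtain ⟨p⟩ := hconn.preconnected x y
    obtain ⟨t, ht, -, -⟩ := p.exists_eq_cons_of_ne (Ne.symm hy)
    exact ⟨t, ht⟩
  -- every vertex is at least (α-β)/2
  have hlow : ∀ i : V, (α - β) / 2 ≤ w i := by
    intro i
    obtain ⟨t, ht⟩ := hnbr i
    have h1 := (hadj i t ht.ne).mp ht
    have h2 := abs_sub_le_iff.mp h1.2
    linarith [h1.1]
  have hnotC0 : ∀ i : V, i ∉ C₀ → (α + β) / 2 ≤ w i := by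
    intro i hi
    by_contra h
    push_neg at h
    exact hi (by rw [hC₀]; exact ⟨hlow i, h⟩)
  have hC0w : ∀ i ∈ C₀, (α - β) / 2 ≤ w i ∧ w i < (α + β) / 2 := by
    intro i hi; rwa [hC₀] at hi
  constructor
  · refine ⟨u₀, c₀, ?_⟩
    have := hlayer_le u₀ c₀ hc₀
    omega
  -- upper bound, first for w u ≤ w v
  have key : ∀ u v : V, w u ≤ w v → G.dist u v ≤ m + 1
  · intro u v huv
    by_cases hvT : w v < (α + β) / 2
    · -- both in C₀; dist ≤ 2
      have huC : u ∈ C₀ := by rw [hC₀]; exact ⟨hlow u, lt_of_le_of_lt huv hvT⟩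
      have hvC : v ∈ C₀ := by rw [hC₀]; exact ⟨hlow v, hvT⟩
      rcases eq_or_ne u v with rfl | hne'
      · rw [SimpleGraph.dist_self]; omega
      by_cases hA : G.Adj u v
      · have := dt_adj_dist_le_one hA; omega
      · -- common neighbor
        have hsum : w u + w v < α := by
          by_contra h
          push_neg at h
          refine hA ((hadj u v hne').mpr ⟨h, ?_⟩)
          rw [abs_sub_le_iff]
          obtain ⟨h1, h2⟩ := hC0w u huC
          obtain ⟨h3, h4⟩ := hC0w v hvC
          constructor <;> linarith
        obtain ⟨t, ht⟩ := hnbr u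
        have h1 := (hadj u t ht.ne).mp ht
        have habs := abs_sub_le_iff.mp h1.2
        have htv : w v < w t := by linarith [h1.1]
        have htne : t ≠ v := fun h => by rw [h] at htv; linarith
        have hAtv : G.Adj t v := by
          refine (hadj t v htne).mpr ⟨by linarith [h1.1], ?_⟩
          rw [abs_sub_le_iff]
          constructor <;> linarith
        have d1 := dt_adj_dist_le_one ht
        have d2 := dt_adj_dist_le_one hAtv
        have := hconn.dist_triangle (u := u) (v := t) (w := v)
        omega
    · push_neg at hvT
      obtain ⟨c, hcC, hcd⟩ := hlayer_ex v
      have hlm : layer v ≤ m := hm v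
      obtain ⟨hc1, hc2⟩ := hC0w c hcC
      have hcv : w c < w v := lt_of_lt_of_le hc2 hvT
      obtain ⟨p, hp⟩ := hconn.exists_walk_length_eq_dist v c
      by_cases huT : (α + β) / 2 ≤ w u
      · have := dt_climb ⟨hβ, hβα, hwpos, hadj⟩ hconn huT p
          (lt_of_lt_of_le hc2 huT) huv
        omega
      · push_neg at huT
        have huC : u ∈ C₀ := by rw [hC₀]; exact ⟨hlow u, huT⟩
        -- extract penultimate vertex x₁
        have hcvne : c ≠ v := fun h => by rw [h] at hcv; linarith
        obtain ⟨x₁, hcx₁, q, hq⟩ := p.reverse.exists_eq_cons_of_ne hcvne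
        have hqlen : q.length + 1 = layer v := by
          have : p.reverse.length = layer v := by
            rw [SimpleGraph.Walk.length_reverse, hp, hcd]
          rw [hq] at this
          simpa using this
        have hdx₁v : G.dist x₁ v ≤ q.length := SimpleGraph.dist_le q
        have hx₁C : x₁ ∉ C₀ := by
          intro hx
          have := hlayer_le v x₁ hx
          rw [SimpleGraph.dist_comm] at this
          omega
        have hx₁w : (α + β) / 2 ≤ w x₁ := hnotC0 x₁ hx₁C
        have hcx := (hadj c x₁ hcx₁.ne).mp hcx₁
        have hcxabs := abs_sub_le_iff.mp hcx.2
        -- show dist u x₁ ≤ 2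
        have hux₁ : G.dist u x₁ ≤ 2 := by
          by_cases h1 : w x₁ ≤ w u + β
          · have hne' : u ≠ x₁ := fun h => by rw [h] at huT; linarith
            have : G.Adj u x₁ := by
              refine (hadj u x₁ hne').mpr ⟨by linarith [hlow u], ?_⟩
              rw [abs_sub_le_iff]
              constructor <;> linarith
            have := dt_adj_dist_le_one this
            omega
          · push_neg at h1
            obtain ⟨t, ht⟩ := hnbr u
            have h2 := (hadj u t ht.ne).mp ht
            have htabs := abs_sub_le_iff.mp h2.2
            have d1 := dt_adj_dist_le_one ht
            by_cases h3 : w x₁ - β ≤ w t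
            · rcases eq_or_ne t x₁ with rfl | hne'
              · omega
              · have hAtx : G.Adj t x₁ := by
                  refine (hadj t x₁ hne').mpr ⟨by linarith, ?_⟩
                  rw [abs_sub_le_iff]
                  constructor <;> linarith
                have d2 := dt_adj_dist_le_one hAtx
                have := hconn.dist_triangle (u := u) (v := t) (w := x₁)
                omega
            · push_neg at h3
              have huc' : u ≠ c := by
                intro h; rw [← h] at hcxabs; linarith [hcxabs.2]
              have hAuc : G.Adj u c := by
                refine (hadj u c huc').mpr ⟨by linarith [h2.1], ?_⟩
                rw [abs_sub_le_iff]
                constructor <;> linarith [(hC0w u huC).1, (hC0w u huC).2]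
              have d2 := dt_adj_dist_le_one hAuc
              have d3 := dt_adj_dist_le_one hcx₁
              have t1 := hconn.dist_triangle (u := u) (v := c) (w := x₁)
              omega
        have := hconn.dist_triangle (u := u) (v := x₁) (w := v)
        omega
  intro u v
  rcases le_total (w u) (w v) with h | h
  · exact key u v h
  · rw [SimpleGraph.dist_comm]; exact key v u h
end

section
/- Let G be a connected (α,β,w)-DT graph on n vertices ordered so that w(1) ≤ … ≤ w(n), with d_i = |N(i)| and d_i⁺ = |N_i⁺| where N_i⁺ = {j > i : ij ∈ E}. Then the number of triangles in G equals Σ_{i=1}^n C(d_i⁺, 2), and hence the global clustering coefficient equals 3·Σᵢ C(d_i⁺,2) / Σᵢ C(d_i,2). -/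
namespace SimpleGraph

variable {V : Type*} [LinearOrder V] [Fintype V] (G : SimpleGraph V) [DecidableRel G.Adj]

def upperNeighborFinset (i : V) : Finset V :=
  Finset.univ.filter (fun j => i < j ∧ G.Adj i j)

variable {G}

@[simp]
theorem mem_upperNeighborFinset {i j : V} :
    j ∈ G.upperNeighborFinset i ↔ i < j ∧ G.Adj i j := by
  simp [upperNeighborFinset]

theorem isNClique_insert_of_subset_upperNeighborFinset
    (hG : ∀ i, G.IsClique (G.upperNeighborFinset i : Set V)) {i : V} {p : Finset V}
    (hp : p ⊆ G.upperNeighborFinset i) (hcard : p.card = 2) :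
    G.IsNClique 3 (insert i p) :=
  IsNClique.insert ⟨(hG i).subset (Finset.coe_subset.mpr hp), hcard⟩
    fun _ hb => (mem_upperNeighborFinset.mp (hp hb)).2

theorem eq_and_eq_of_insert_eq_insert {i i' : V} {p p' : Finset V}
    (hp : p ⊆ G.upperNeighborFinset i) (hp' : p' ⊆ G.upperNeighborFinset i')
    (h : insert i p = insert i' p') : i = i' ∧ p = p' := by
  have lt_of_mem {i : V} {p : Finset V} (hp : p ⊆ G.upperNeighborFinset i) {j : V}
      (hj : j ∈ p) : i < j := (mem_upperNeighborFinset.mp (hp hj)).1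
  have hii' : i = i' := by
    by_contra hne
    have hi'p : i' ∈ insert i p := h ▸ Finset.mem_insert_self i' p'
    have hip' : i ∈ insert i' p' := h ▸ Finset.mem_insert_self i p
    rw [Finset.mem_insert] at hi'p hip'
    rcases hi'p with hi'p | hi'p
    · exact hne hi'p.symm
    rcases hip' with hip' | hip'
    · exact hne hip'
    exact lt_asymm (lt_of_mem hp hi'p) (lt_of_mem hp' hip')
  subst hii'
  refine ⟨rfl, ?_⟩
  rw [← Finset.erase_insert (fun hi => lt_irrefl i (lt_of_mem hp hi)), h,
    Finset.erase_insert (fun hi => lt_irrefl i (lt_of_mem hp' hi))]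

theorem exists_insert_eq_of_isNClique_three {t : Finset V} (ht : G.IsNClique 3 t) :
    ∃ i, ∃ p ⊆ G.upperNeighborFinset i, p.card = 2 ∧ insert i p = t := by
  have hne : t.Nonempty := Finset.card_pos.mp (by rw [ht.card_eq]; norm_num)
  refine ⟨t.min' hne, t.erase (t.min' hne), fun j hj => ?_, ?_,
    Finset.insert_erase (t.min'_mem hne)⟩
  · exact mem_upperNeighborFinset.mpr ⟨Finset.min'_lt_of_mem_erase_min' t hne hj,
      ht.isClique (t.min'_mem hne) (Finset.mem_of_mem_erase hj) (Finset.ne_of_mem_erase hj).symm⟩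
  · rw [Finset.card_erase_of_mem (t.min'_mem hne), ht.card_eq]

theorem card_cliqueFinset_three_eq_sum_choose
    (hG : ∀ i, G.IsClique (G.upperNeighborFinset i : Set V)) :
    (G.cliqueFinset 3).card = ∑ i, (G.upperNeighborFinset i).card.choose 2 := by
  simp_rw [← Finset.card_powersetCard]
  rw [← Finset.card_sigma]
  symm
  refine Finset.card_bij (fun x _ => insert x.1 x.2) ?_ ?_ ?_
  · rintro ⟨i, p⟩ hx
    obtain ⟨-, hp⟩ := Finset.mem_sigma.mp hx
    rw [Finset.mem_powersetCard] at hp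
    exact mem_cliqueFinset_iff.mpr (isNClique_insert_of_subset_upperNeighborFinset hG hp.1 hp.2)
  · rintro ⟨i, p⟩ hx ⟨i', p'⟩ hx' h
    obtain ⟨-, hp⟩ := Finset.mem_sigma.mp hx
    obtain ⟨-, hp'⟩ := Finset.mem_sigma.mp hx'
    obtain ⟨rfl, rfl⟩ := eq_and_eq_of_insert_eq_insert
      (Finset.mem_powersetCard.mp hp).1 (Finset.mem_powersetCard.mp hp').1 h
    rfl
  · intro t ht
    obtain ⟨i, p, hp, hcard, rfl⟩ :=
      exists_insert_eq_of_isNClique_three (mem_cliqueFinset_iff.mp ht)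
    exact ⟨⟨i, p⟩, Finset.mem_sigma.mpr ⟨Finset.mem_univ i,
      Finset.mem_powersetCard.mpr ⟨hp, hcard⟩⟩, rfl⟩

end SimpleGraph

theorem IsDTGraph.adj_of_adj_of_weight_le {V : Type*} {G : SimpleGraph V} {α β : ℝ} {w : V → ℝ}
    (hDT : IsDTGraph G α β w) {i j k : V} (hij : w i ≤ w j) (hjk : w j ≤ w k) (hne : j ≠ k)
    (hk : G.Adj i k) : G.Adj j k := by
  obtain ⟨hsum, habs⟩ := (hDT.2.2.2 i k hk.ne).mp hk
  rw [hDT.2.2.2 j k hne, abs_sub_comm, abs_of_nonneg (sub_nonneg.mpr hjk)]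
  rw [abs_sub_comm, abs_of_nonneg (sub_nonneg.mpr (hij.trans hjk))] at habs
  constructor <;> linarith

theorem IsDTGraph.isClique_upperNeighborFinset {V : Type*} [LinearOrder V] [Fintype V]
    {G : SimpleGraph V} [DecidableRel G.Adj] {α β : ℝ} {w : V → ℝ}
    (hDT : IsDTGraph G α β w) (hmono : Monotone w) (i : V) :
    G.IsClique (G.upperNeighborFinset i : Set V) := by
  intro j hj k hk hne
  simp only [Finset.mem_coe, SimpleGraph.mem_upperNeighborFinset] at hj hk
  rcases hne.lt_or_gt with hlt | hlt
  · exact hDT.adj_of_adj_of_weight_le (hmono hj.1.le) (hmono hlt.le) hne hk.2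
  · exact (hDT.adj_of_adj_of_weight_le (hmono hk.1.le) (hmono hlt.le) hne.symm hj.2).symm

theorem stmt_18_general {n : ℕ} (G : SimpleGraph (Fin n)) [DecidableRel G.Adj]
    (α β : ℝ) (w : Fin n → ℝ) (hDT : IsDTGraph G α β w)
    (hmono : Monotone w)
    (d dplus : Fin n → ℕ)
    (hdplus : ∀ i, dplus i = (Finset.univ.filter (fun j => i < j ∧ G.Adj i j)).card) :
    (G.cliqueFinset 3).card = ∑ i : Fin n, Nat.choose (dplus i) 2 ∧
      (3 * ((G.cliqueFinset 3).card : ℚ)) / (∑ i : Fin n, (Nat.choose (d i) 2 : ℚ)) =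
        (3 * ∑ i : Fin n, (Nat.choose (dplus i) 2 : ℚ)) /
          (∑ i : Fin n, (Nat.choose (d i) 2 : ℚ)) := by
  have htriangles : (G.cliqueFinset 3).card = ∑ i : Fin n, Nat.choose (dplus i) 2 := by
    simp_rw [hdplus]
    exact SimpleGraph.card_cliqueFinset_three_eq_sum_choose
      (hDT.isClique_upperNeighborFinset hmono)
  refine ⟨htriangles, ?_⟩
  rw [htriangles]
  push_cast
  rfl

/-- For a connected DT graph on vertices `1, …, n` ordered by nondecreasing
weight, the number of triangles equals `∑ i, C(dᵢ⁺, 2)`, and hence the global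
clustering coefficient equals `3·∑ᵢ C(dᵢ⁺,2) / ∑ᵢ C(dᵢ,2)`. -/
theorem stmt_18 {n : ℕ} (G : SimpleGraph (Fin n)) [DecidableRel G.Adj]
    (α β : ℝ) (w : Fin n → ℝ) (hDT : IsDTGraph G α β w) (hconn : G.Connected)
    (hmono : Monotone w)
    (d dplus : Fin n → ℕ)
    (hd : ∀ i, d i = (G.neighborFinset i).card)
    (hdplus : ∀ i, dplus i = (Finset.univ.filter (fun j => i < j ∧ G.Adj i j)).card) :
    (G.cliqueFinset 3).card = ∑ i : Fin n, Nat.choose (dplus i) 2 ∧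
      (3 * ((G.cliqueFinset 3).card : ℚ)) / (∑ i : Fin n, (Nat.choose (d i) 2 : ℚ)) =
        (3 * ∑ i : Fin n, (Nat.choose (dplus i) 2 : ℚ)) /
          (∑ i : Fin n, (Nat.choose (d i) 2 : ℚ)) :=
  stmt_18_general G α β w hDT hmono d dplus hdplus
end

section
/- Let G be a semi unit interval graph and (V_T, V_U) a p-max partition of V. If S is the vertex set of an induced K₁,₃ in G with center vertex j ∈ V_U, leaves k₁, k₂ ∈ V_U, and one leaf i ∈ V_T, then a contradiction follows; i.e., G contains no induced K₁,₃ whose center and two of whose leaves lie in V_U while the third leaf lies in V_T. -/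
/-- If `(V_T, V_U)` is a `p`-max partition of a DT graph (with
`V_T = {i : w i ∈ [(α-β)/2, (α+β)/2)}`, `V_U = V \ V_T`, `p ∈ V_T` of maximum
weight in `V_T`), then `G` has no induced `K₁,₃` whose center `j` and two leaves
`k₁, k₂` lie in `V_U` while the third leaf `i` lies in `V_T`. -/
theorem stmt_19 {V : Type*} (G : SimpleGraph V) (α β : ℝ) (w : V → ℝ)
    (hDT : IsDTGraph G α β w)
    (VT VU : Set V)
    (hVT : VT = {i : V | (α - β) / 2 ≤ w i ∧ w i < (α + β) / 2})
    (hVU : VU = VTᶜ)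
    (p : V) (hp : p ∈ VT) (hpmax : ∀ i ∈ VT, w i ≤ w p) :
    ¬ ∃ j k₁ k₂ i : V, j ∈ VU ∧ k₁ ∈ VU ∧ k₂ ∈ VU ∧ i ∈ VT ∧
      j ≠ k₁ ∧ j ≠ k₂ ∧ j ≠ i ∧ k₁ ≠ k₂ ∧ k₁ ≠ i ∧ k₂ ≠ i ∧
      G.Adj j k₁ ∧ G.Adj j k₂ ∧ G.Adj j i ∧
      ¬ G.Adj k₁ k₂ ∧ ¬ G.Adj k₁ i ∧ ¬ G.Adj k₂ i := by
  obtain ⟨hβ, hβα, hwpos, hadj⟩ := hDT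
  rintro ⟨j, k₁, k₂, i, hj, hk₁, hk₂, hi, hjk₁, hjk₂, hji, hk₁k₂, hk₁i, hk₂i,
    ajk₁, ajk₂, aji, nk₁k₂, nk₁i, nk₂i⟩
  subst hVT hVU
  simp only [Set.mem_compl_iff, Set.mem_setOf_eq, not_and, not_lt, not_le] at hj hk₁ hk₂ hi
  obtain ⟨hi1, hi2⟩ := hi
  rw [hadj j i hji] at aji
  rw [hadj j k₁ hjk₁] at ajk₁
  rw [hadj j k₂ hjk₂] at ajk₂
  rw [hadj k₁ k₂ hk₁k₂] at nk₁k₂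
  rw [hadj k₁ i hk₁i] at nk₁i
  rw [hadj k₂ i hk₂i] at nk₂i
  obtain ⟨aji1, aji2⟩ := aji
  obtain ⟨ajk₁1, ajk₁2⟩ := ajk₁
  obtain ⟨ajk₂1, ajk₂2⟩ := ajk₂
  rw [abs_sub_le_iff] at aji2 ajk₁2 ajk₂2
  -- w j ≥ (α+β)/2
  have hwj : (α + β) / 2 ≤ w j := hj (by linarith)
  -- k₁, k₂ have weight ≥ (α+β)/2
  have hwk₁ : (α + β) / 2 ≤ w k₁ := hk₁ (by linarith [ajk₁2.1])
  have hwk₂ : (α + β) / 2 ≤ w k₂ := hk₂ (by linarith [ajk₂2.1])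
  -- non-adjacency to i forces w k > w i + β
  have h1 : w i + β < w k₁ := by
    rcases not_and_or.mp nk₁i with h | h
    · exact absurd (by linarith) h
    · rw [not_le, lt_abs] at h
      rcases h with h | h <;> [linarith [abs_nonneg (w k₁ - w i)]; linarith]
  have h2 : w i + β < w k₂ := by
    rcases not_and_or.mp nk₂i with h | h
    · exact absurd (by linarith) h
    · rw [not_le, lt_abs] at h
      rcases h with h | h <;> linarith
  -- non-adjacency of k₁ k₂ forces |w k₁ - w k₂| > β
  rcases not_and_or.mp nk₁k₂ with h | h
  · exact absurd (by linarith) h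
  · rw [not_le, lt_abs] at h
    rcases h with h | h
    · linarith [ajk₁2.2, aji2.1]
    · linarith [ajk₂2.2, aji2.1]
end
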